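/- arXiv:1308.5547 — 4 statements merged into one kernel-verified Lean document; each statement's English description precedes it below -/
import Mathlib

section
/- Let A be a finite dimensional hereditary algebra over an algebraically closed field K, given as the path algebra of a finite connected acyclic quiver with n vertices. If X = {X_1,...,X_t} is a stratifying system over A (i.e., each X_i is indecomposable, Hom_A(X_j, X_i) = 0 for j > i, and Ext^1_A(X_j, X_i) = 0 for j ≥ i), then t ≤ n. -/
open CategoryTheory CategoryTheory.Limits

noncomputable section

/-- `Hom_A(M,N) = 0`. -/
def HomZero (R : Type) [Ring R] (M N : ModuleCat R) : Prop := ∀ f : M ⟶ N, f = 0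

/-- `Ext¹_A(M,N) = 0`, expressed by: every short exact sequence `0 → N → E → M → 0`
in `mod A` splits. -/
def Ext1Zero (R : Type) [Ring R] (M N : ModuleCat R) : Prop :=
  ∀ (S : CategoryTheory.ShortComplex (ModuleCat R)), S.ShortExact →
    (S.X₁ ≅ N) → (S.X₃ ≅ M) → Nonempty S.Splitting

/-- An indecomposable module: nonzero, and any direct sum decomposition is trivial. -/
def Indec (R : Type) [Ring R] (M : ModuleCat R) : Prop :=
  ¬ IsZero M ∧ ∀ N P : ModuleCat R, Nonempty (M ≅ N ⊞ P) → IsZero N ∨ IsZero P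

/-- A stratifying system of size `t`: a sequence `X₁, …, X_t` of indecomposable modules with
`Hom(X_j, X_i) = 0` for `j > i` and `Ext¹(X_j, X_i) = 0` for `j ≥ i`. -/
def IsStratSys (R : Type) [Ring R] {t : ℕ} (X : Fin t → ModuleCat R) : Prop :=
  (∀ i, Indec R (X i)) ∧
  (∀ i j : Fin t, i < j → HomZero R (X j) (X i)) ∧
  (∀ i j : Fin t, i ≤ j → Ext1Zero R (X j) (X i))

/-- `R` is a hereditary ring: every submodule of a projective module is projective. -/
def Hereditary (R : Type) [Ring R] : Prop :=
  ∀ (P : ModuleCat.{0} R), Projective P → ∀ N : Submodule R P, Projective (ModuleCat.of R N)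

/-- `S` is a complete list of `n` pairwise non-isomorphic simple `R`-modules; the number `n`
is then the rank of the Grothendieck group `K₀(R)`. -/
def IsCompleteSimpleList (R : Type) [Ring R] {n : ℕ} (S : Fin n → ModuleCat R) : Prop :=
  (∀ i, IsSimpleModule R (S i)) ∧
  (∀ i j : Fin n, i ≠ j → IsEmpty (S i ≅ S j)) ∧
  (∀ M : ModuleCat R, IsSimpleModule R M → ∃ i, Nonempty (M ≅ S i))

/-!
Choose projective presentations `0 → P₁ⱼ → P₀ⱼ → X_j → 0` (the kernel is projective because `A`
is hereditary) and put `⟨X_j, N⟩ = dim Hom(P₀ⱼ, N) - dim Hom(P₁ⱼ, N)`. Since `Hom(P, -)` is exact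
for projective `P`, this is additive in `N`; hence every linear relation among the vectors
`(⟨X_j, S_i⟩)ᵢ ∈ ℚⁿ` also holds among the vectors `(⟨X_j, N⟩)` for any module `N` of finite
length, by induction on a composition series. Take `N = X_m`: as `Ext¹(X_j, X_m) = 0` for `j ≥ m`,
`⟨X_j, X_m⟩ = dim Hom(X_j, X_m)`, which vanishes for `j > m` and not for `j = m`. So the matrix
`(⟨X_j, X_m⟩)` is triangular with nonzero diagonal, the `t` vectors `(⟨X_j, S_i⟩)ᵢ` are linearly
independent in `ℚⁿ`, and `t ≤ n`.
-/

open Module (finrank)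

universe u v

section Exactness

variable {R : Type*} [Ring R] {M₁ M₂ M₃ P : Type*} [AddCommGroup M₁] [AddCommGroup M₂]
  [AddCommGroup M₃] [AddCommGroup P] [Module R M₁] [Module R M₂] [Module R M₃] [Module R P]
  {f : M₁ →ₗ[R] M₂} {g : M₂ →ₗ[R] M₃}

theorem Function.Exact.exact_linearMapComp_left (h : Function.Exact f g)
    (hf : Function.Injective f) :
    Function.Exact (fun u : P →ₗ[R] M₁ ↦ f ∘ₗ u) (fun u : P →ₗ[R] M₂ ↦ g ∘ₗ u) := by
  intro u
  refine ⟨fun hu ↦ ?_, ?_⟩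
  · have hmem (x : P) : u x ∈ LinearMap.range f := by
      rw [← h.linearMap_ker_eq]
      exact LinearMap.congr_fun hu x
    refine ⟨(LinearEquiv.ofInjective f hf).symm ∘ₗ u.codRestrict _ hmem, ?_⟩
    ext x
    simp [← LinearEquiv.ofInjective_apply (h := hf)]
  · rintro ⟨w, rfl⟩
    dsimp only
    rw [← LinearMap.comp_assoc, h.linearMap_comp_eq_zero, LinearMap.zero_comp]

theorem Function.Exact.exact_linearMapComp_right (h : Function.Exact f g)
    (hg : Function.Surjective g) :
    Function.Exact (fun u : M₃ →ₗ[R] P ↦ u ∘ₗ g) (fun u : M₂ →ₗ[R] P ↦ u ∘ₗ f) := by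
  intro u
  refine ⟨fun hu ↦ ?_, ?_⟩
  · refine ⟨(LinearMap.range f).liftQ u (LinearMap.range_le_ker_iff.mpr hu) ∘ₗ
      (h.linearEquivOfSurjective hg).symm.toLinearMap, ?_⟩
    ext x
    simp
  · rintro ⟨w, rfl⟩
    dsimp only
    rw [LinearMap.comp_assoc, h.linearMap_comp_eq_zero, LinearMap.comp_zero]

theorem Module.Projective.surjective_linearMapComp_left [Module.Projective R P]
    (hg : Function.Surjective g) : Function.Surjective (fun u : P →ₗ[R] M₂ ↦ g ∘ₗ u) :=
  fun u ↦ Module.projective_lifting_property g u hg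

end Exactness

theorem Module.finrank_eq_add_of_exact {K V₁ V₂ V₃ : Type*} [DivisionRing K]
    [AddCommGroup V₁] [AddCommGroup V₂] [AddCommGroup V₃] [Module K V₁] [Module K V₂]
    [Module K V₃] [FiniteDimensional K V₂] {f : V₁ →ₗ[K] V₂} {g : V₂ →ₗ[K] V₃}
    (hf : Function.Injective f) (hg : Function.Surjective g) (h : Function.Exact f g) :
    finrank K V₂ = finrank K V₁ + finrank K V₃ := by
  rw [← g.finrank_range_add_finrank_ker, LinearMap.range_eq_top.mpr hg, finrank_top,
    h.linearMap_ker_eq, LinearMap.finrank_range_of_inj hf, add_comm]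

theorem LinearIndependent.of_sum_smul_eq_zero {ι R M M' : Type*} [Fintype ι] [Ring R]
    [AddCommGroup M] [Module R M] [AddCommGroup M'] [Module R M'] {v : ι → M} {w : ι → M'}
    (hw : LinearIndependent R w) (h : ∀ c : ι → R, ∑ i, c i • v i = 0 → ∑ i, c i • w i = 0) :
    LinearIndependent R v :=
  Fintype.linearIndependent_iff.mpr fun c hc ↦ Fintype.linearIndependent_iff.mp hw c (h c hc)

instance Module.Finite.linearMap_of_isNoetherianRing {R S M N : Type*} [Ring R] [Ring S]
    [IsNoetherianRing S] [AddCommGroup M] [Module R M] [Module.Finite R M] [AddCommGroup N]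
    [Module R N] [Module S N] [SMulCommClass R S N] [Module.Finite S N] :
    Module.Finite S (M →ₗ[R] N) := by
  obtain ⟨m, π, hπ⟩ := Module.Finite.exists_fin' R M
  exact .of_injective (LinearMap.lcomp S N π) (LinearMap.lcomp_injective_of_surjective π hπ)

namespace LinearMap

variable {R : Type*} [Ring R] {M N P₀ P₁ : Type*} [AddCommGroup M] [AddCommGroup N]
  [AddCommGroup P₀] [AddCommGroup P₁] [Module R M] [Module R N] [Module R P₀] [Module R P₁]
  (f : P₁ →ₗ[R] N) (ι : P₁ →ₗ[R] P₀)

abbrev Pushout := (N × P₀) ⧸ range (f.prod (-ι))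

namespace Pushout

def inl : N →ₗ[R] Pushout f ι := (range (f.prod (-ι))).mkQ ∘ₗ LinearMap.inl R N P₀

def inr : P₀ →ₗ[R] Pushout f ι := (range (f.prod (-ι))).mkQ ∘ₗ LinearMap.inr R N P₀

theorem inr_comp : inr f ι ∘ₗ ι = inl f ι ∘ₗ f := by
  ext x
  refine (Submodule.Quotient.eq _).mpr ⟨-x, ?_⟩
  simp

variable {ι}

theorem inl_injective (hι : Function.Injective ι) : Function.Injective (inl f ι) := by
  rw [← ker_eq_bot, ker_eq_bot']
  rintro y hy
  obtain ⟨x, hx⟩ := (Submodule.Quotient.mk_eq_zero _).mp hy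
  have hx₂ : ι x = 0 := by simpa using congrArg Prod.snd hx
  have hx₁ : f x = y := congrArg Prod.fst hx
  rw [← hx₁, hι (hx₂.trans ι.map_zero.symm), map_zero]

variable {π : P₀ →ₗ[R] M}

def desc (h : Function.Exact ι π) : Pushout f ι →ₗ[R] M :=
  (range (f.prod (-ι))).liftQ (π ∘ₗ snd R N P₀) <| by
    rintro _ ⟨x, rfl⟩
    simp [h.apply_apply_eq_zero]

theorem desc_surjective (h : Function.Exact ι π) (hπ : Function.Surjective π) :
    Function.Surjective (desc f h) := fun y ↦
  let ⟨x, hx⟩ := hπ y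
  ⟨inr f ι x, hx⟩

theorem exact_inl_desc (h : Function.Exact ι π) : Function.Exact (inl f ι) (desc f h) := by
  intro z
  obtain ⟨⟨y, x⟩, rfl⟩ := Submodule.Quotient.mk_surjective _ z
  refine ⟨fun hz ↦ ?_, ?_⟩
  · obtain ⟨w, rfl⟩ := (h x).mp hz
    refine ⟨y + f w, (Submodule.Quotient.eq _).mpr ⟨w, ?_⟩⟩
    simp
  · rintro ⟨y', hy'⟩
    rw [← hy']
    simp [inl, desc]

end Pushout

end LinearMap

section HomDimension

variable (K A : Type*) [Field K] [Ring A] [Algebra K A]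

/-- For a projective resolution `0 → P₁ → P₀ → M → 0` this is the Euler form
`⟨M, N⟩ = dim Hom(M, N) - dim Ext¹(M, N)`. -/
def homEuler (P₀ P₁ N : Type*) [AddCommGroup P₀] [Module A P₀] [AddCommGroup P₁] [Module A P₁]
    [AddCommGroup N] [Module A N] [Module K N] [IsScalarTower K A N] : ℤ :=
  finrank K (P₀ →ₗ[A] N) - finrank K (P₁ →ₗ[A] N)

variable {K A} {P P₀ P₁ N N₁ N₂ N₃ : Type*} [AddCommGroup P] [Module A P]
  [AddCommGroup P₀] [Module A P₀] [AddCommGroup P₁] [Module A P₁]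
  [AddCommGroup N] [Module A N] [Module K N] [IsScalarTower K A N]
  [AddCommGroup N₁] [Module A N₁] [Module K N₁] [IsScalarTower K A N₁]
  [AddCommGroup N₂] [Module A N₂] [Module K N₂] [IsScalarTower K A N₂]
  [AddCommGroup N₃] [Module A N₃] [Module K N₃] [IsScalarTower K A N₃]

theorem finrank_linearMap_congr_right (e : N₁ ≃ₗ[A] N₂) :
    finrank K (P →ₗ[A] N₁) = finrank K (P →ₗ[A] N₂) :=
  (LinearEquiv.ofLinearMap (LinearMap.compRight K e.toLinearMap)
    (LinearMap.compRight K e.symm.toLinearMap) (by ext; simp) (by ext; simp)).finrank_eq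

theorem finrank_linearMap_eq_add_of_exact [Module.Projective A P] [Module.Finite A P]
    [FiniteDimensional K N₂] {f : N₁ →ₗ[A] N₂} {g : N₂ →ₗ[A] N₃} (hf : Function.Injective f)
    (hg : Function.Surjective g) (h : Function.Exact f g) :
    finrank K (P →ₗ[A] N₂) = finrank K (P →ₗ[A] N₁) + finrank K (P →ₗ[A] N₃) :=
  Module.finrank_eq_add_of_exact (f := LinearMap.compRight K f) (g := LinearMap.compRight K g)
    hf.injective_linearMapComp_left (Module.Projective.surjective_linearMapComp_left hg)
    (h.exact_linearMapComp_left hf)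

theorem homEuler_congr_right (e : N₁ ≃ₗ[A] N₂) :
    homEuler K A P₀ P₁ N₁ = homEuler K A P₀ P₁ N₂ := by
  rw [homEuler, homEuler, finrank_linearMap_congr_right e, finrank_linearMap_congr_right e]

theorem homEuler_of_subsingleton [Subsingleton N] : homEuler K A P₀ P₁ N = 0 := by
  have : Subsingleton (P₀ →ₗ[A] N) := DFunLike.subsingleton_cod
  have : Subsingleton (P₁ →ₗ[A] N) := DFunLike.subsingleton_cod
  simp [homEuler, Module.finrank_zero_of_subsingleton]

theorem homEuler_eq_add_of_exact [Module.Projective A P₀] [Module.Finite A P₀]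
    [Module.Projective A P₁] [Module.Finite A P₁] [FiniteDimensional K N₂]
    {f : N₁ →ₗ[A] N₂} {g : N₂ →ₗ[A] N₃} (hf : Function.Injective f)
    (hg : Function.Surjective g) (h : Function.Exact f g) :
    homEuler K A P₀ P₁ N₂ = homEuler K A P₀ P₁ N₁ + homEuler K A P₀ P₁ N₃ := by
  simp only [homEuler, finrank_linearMap_eq_add_of_exact (K := K) hf hg h]
  push_cast
  ring

theorem sum_mul_homEuler_eq_zero {ι : Type*} [Fintype ι] (c : ι → ℚ) (P₀ P₁ : ι → Type*)
    [∀ j, AddCommGroup (P₀ j)] [∀ j, Module A (P₀ j)] [∀ j, Module.Projective A (P₀ j)]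
    [∀ j, Module.Finite A (P₀ j)] [∀ j, AddCommGroup (P₁ j)] [∀ j, Module A (P₁ j)]
    [∀ j, Module.Projective A (P₁ j)] [∀ j, Module.Finite A (P₁ j)]
    (hsimple : ∀ (V : Type u) [AddCommGroup V] [Module A V] [Module K V] [IsScalarTower K A V],
      IsSimpleModule A V → ∑ j, c j * (homEuler K A (P₀ j) (P₁ j) V : ℚ) = 0)
    (N : Type u) [AddCommGroup N] [Module A N] [Module K N] [IsScalarTower K A N]
    [FiniteDimensional K N] :
    ∑ j, c j * (homEuler K A (P₀ j) (P₁ j) N : ℚ) = 0 := by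
  have hN : IsFiniteLength A N := isFiniteLength_iff_isNoetherian_isArtinian.mpr
    ⟨isNoetherian_of_tower K inferInstance, isArtinian_of_tower K inferInstance⟩
  revert ‹Module K N›
  induction hN with
  | of_subsingleton =>
    intro _ _ _
    simp [homEuler_of_subsingleton]
  | @of_simple_quotient M _ _ L _ _ ih =>
    intro _ _ _
    have : FiniteDimensional K L := .of_injective (L.subtype.restrictScalars K) L.injective_subtype
    simp only [homEuler_eq_add_of_exact (K := K) L.injective_subtype L.mkQ_surjective
      (LinearMap.exact_subtype_mkQ L), Int.cast_add, mul_add, Finset.sum_add_distrib, ih,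
      hsimple (M ⧸ L) ‹_›, add_zero]

end HomDimension

section Stratification

variable {A : Type} [Ring A] {M N : ModuleCat.{v} A}

theorem Ext1Zero.exists_leftInverse (hMN : Ext1Zero A M N) {E : Type v} [AddCommGroup E]
    [Module A E] {i : N →ₗ[A] E} {p : E →ₗ[A] M} (hi : Function.Injective i)
    (hp : Function.Surjective p) (h : Function.Exact i p) :
    ∃ r : E →ₗ[A] N, r ∘ₗ i = LinearMap.id := by
  obtain ⟨s⟩ := hMN (ShortComplex.moduleCatMk i p h.linearMap_comp_eq_zero)
    (ModuleCat.shortComplex_shortExact _ h hi hp) (Iso.refl _) (Iso.refl _)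
  exact ⟨s.r.hom, congrArg ModuleCat.Hom.hom s.f_r⟩

variable {P₀ P₁ : Type} [AddCommGroup P₀] [AddCommGroup P₁] [Module A P₀] [Module A P₁]
  {ι : P₁ →ₗ[A] P₀} {π : P₀ →ₗ[A] M}

/-- The extension of `f` is read off a splitting of the pushout of `0 → P₁ → P₀ → M → 0`
along `f`. -/
theorem Ext1Zero.exists_comp_eq (hMN : Ext1Zero A M N) (hι : Function.Injective ι)
    (hπ : Function.Surjective π) (h : Function.Exact ι π) (f : P₁ →ₗ[A] N) :
    ∃ g : P₀ →ₗ[A] N, g ∘ₗ ι = f := by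
  obtain ⟨r, hr⟩ := hMN.exists_leftInverse (LinearMap.Pushout.inl_injective f hι)
    (LinearMap.Pushout.desc_surjective f h hπ) (LinearMap.Pushout.exact_inl_desc f h)
  refine ⟨r ∘ₗ LinearMap.Pushout.inr f ι, ?_⟩
  rw [LinearMap.comp_assoc, LinearMap.Pushout.inr_comp, ← LinearMap.comp_assoc, hr,
    LinearMap.id_comp]

theorem homEuler_eq_finrank_of_ext1Zero {K : Type*} [Field K] [Algebra K A] [Module K N]
    [IsScalarTower K A N] [FiniteDimensional K N] [Module.Finite A P₀] (hMN : Ext1Zero A M N)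
    (hι : Function.Injective ι) (hπ : Function.Surjective π) (h : Function.Exact ι π) :
    homEuler K A P₀ P₁ N = finrank K (M →ₗ[A] N) := by
  have := Module.finrank_eq_add_of_exact (f := LinearMap.lcomp K N π)
    (g := LinearMap.lcomp K N ι) (LinearMap.lcomp_injective_of_surjective π hπ)
    (hMN.exists_comp_eq hι hπ h) (h.exact_linearMapComp_right hπ)
  rw [homEuler, this]
  push_cast
  ring

theorem HomZero.subsingleton_linearMap (h : HomZero A M N) : Subsingleton (M →ₗ[A] N) :=
  ⟨fun f g ↦ (congrArg ModuleCat.Hom.hom (h (ModuleCat.ofHom f))).trans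
    (congrArg ModuleCat.Hom.hom (h (ModuleCat.ofHom g))).symm⟩

theorem Indec.nontrivial (h : Indec A M) : Nontrivial M :=
  not_subsingleton_iff_nontrivial.mp fun _ ↦ h.1 (ModuleCat.isZero_of_subsingleton M)

theorem Hereditary.projective_submodule (hA : Hereditary A) {P : Type} [AddCommGroup P]
    [Module A P] [Module.Projective A P] (L : Submodule A P) : Module.Projective A L :=
  (IsProjective.iff_projective L).mpr (hA (.of A P) ((IsProjective.iff_projective P).mp ‹_›) L)

theorem IsCompleteSimpleList.exists_linearEquiv {n : ℕ} {S : Fin n → ModuleCat.{u} A}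
    (hS : IsCompleteSimpleList A S) (V : Type*) [AddCommGroup V] [Module A V]
    [IsSimpleModule A V] : ∃ i, Nonempty (V ≃ₗ[A] S i) := by
  obtain ⟨I, -, ⟨e⟩⟩ := isSimpleModule_iff_quot_maximal.mp ‹IsSimpleModule A V›
  let e' : V ≃ₗ[A] ULift.{u} (A ⧸ I) := e.trans ULift.moduleEquiv.symm
  obtain ⟨i, ⟨f⟩⟩ := hS.2.2 (.of A (ULift.{u} (A ⧸ I))) (IsSimpleModule.congr e'.symm)
  exact ⟨i, ⟨e'.trans f.toLinearEquiv⟩⟩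

end Stratification

/-- Over a finite dimensional hereditary algebra `A` (such as the path
algebra `KQ` of a finite connected acyclic quiver with `n` vertices, `n` being the number
of isomorphism classes of simple `A`-modules), every stratifying system has size `t ≤ n`. -/
theorem stratifying_system_size_le (K A : Type) [Field K] [Ring A] [Algebra K A]
    [FiniteDimensional K A] (hA : Hereditary A)
    (n t : ℕ) (S : Fin n → ModuleCat A) (hS : IsCompleteSimpleList A S)
    (X : Fin t → ModuleCat A) (hfin : ∀ i, Module.Finite A (X i))
    (hX : IsStratSys A X) :
    t ≤ n := by
  obtain ⟨hindec, hhom, hext⟩ := hX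
  let _ (i : Fin n) : Module K (S i) := .compHom _ (algebraMap K A)
  let _ (j : Fin t) : Module K (X j) := .compHom _ (algebraMap K A)
  have (i : Fin n) : IsScalarTower K A (S i) := .of_compHom K A _
  have (j : Fin t) : IsScalarTower K A (X j) := .of_compHom K A _
  have : IsNoetherianRing A := isNoetherian_of_tower K inferInstance
  have (j : Fin t) : FiniteDimensional K (X j) := Module.Finite.trans A (X j)
  choose μ π hπ using fun j ↦ (hfin j).exists_fin'
  have (j : Fin t) : Module.Projective A (LinearMap.ker (π j)) := hA.projective_submodule _
  let E : Matrix (Fin t) (Fin t) ℚ :=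
    .of fun j m ↦ homEuler K A (Fin (μ j) → A) (LinearMap.ker (π j)) (X m)
  have hE (j m) (hmj : m ≤ j) : E j m = finrank K (X j →ₗ[A] X m) := by
    simp [E, homEuler_eq_finrank_of_ext1Zero (hext m j hmj)
      (LinearMap.ker (π j)).injective_subtype (hπ j) (LinearMap.exact_subtype_ker_map _)]
  have hdet : E.det ≠ 0 := by
    rw [Matrix.det_of_isUpperTriangular fun j m hmj ↦ ?_]
    · refine Finset.prod_ne_zero_iff.mpr fun m _ ↦ ?_
      have := (hindec m).nontrivial
      simpa [hE m m le_rfl] using Module.finrank_pos.ne'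
    · have := (hhom m j hmj).subsingleton_linearMap
      simp [hE j m hmj.le, Module.finrank_zero_of_subsingleton]
  have hΦ : LinearIndependent ℚ fun j (i : Fin n) ↦
      (homEuler K A (Fin (μ j) → A) (LinearMap.ker (π j)) (S i) : ℚ) := by
    refine (Matrix.linearIndependent_rows_of_det_ne_zero hdet).of_sum_smul_eq_zero
      fun c hc ↦ funext fun m ↦ ?_
    have hsimple (V : Type _) [AddCommGroup V] [Module A V] [Module K V] [IsScalarTower K A V]
        (_ : IsSimpleModule A V) :
        ∑ j, c j * (homEuler K A (Fin (μ j) → A) (LinearMap.ker (π j)) V : ℚ) = 0 := by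
      obtain ⟨i, ⟨e⟩⟩ := hS.exists_linearEquiv V
      simpa [homEuler_congr_right e, Finset.sum_apply] using congrFun hc i
    simpa [E, Finset.sum_apply] using sum_mul_homEuler_eq_zero c _ _ hsimple (X m)
  simpa using hΦ.fintype_card_le_finrank
end
end

section
/- Let A be an algebra and T_λ a hereditary standard stable tube of rank r_λ ≥ 1 in the Auslander–Reiten quiver of A, with mouth τ-cycle (X_1,...,X_{r_λ}). Then the sequence (X_{r_λ−1}, X_{r_λ−2}, ..., X_1) is a stratifying system of size r_λ − 1, i.e., consecutive ordering gives Hom_A(X_i, X_j) = 0 for i < j (with the chosen ordering) and Ext^1_A(X_i, X_j) = 0 for 1 ≤ i ≤ j ≤ r_λ − 1. -/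
open CategoryTheory CategoryTheory.Limits

noncomputable section

/-- The set of mouth indices in the cone of the module `E_i[m]` of a stable tube of rank `r`. -/
def coneSet (r : ℕ) (i : ZMod r) (m : ℕ) : Finset (ZMod r) :=
  (Finset.range m).image fun s : ℕ => i + (s : ZMod r)

/-- A hereditary standard stable tube of rank `r` in `Γ(mod R)`: the modules `E j m = E_j[m]`
(of regular length `m ≥ 1` on the ray starting at the mouth module `E_j = E_j[1]`), where
the mouth modules form a `τ`-cycle `τ E_j = E_{j-1}` of pairwise orthogonal bricks, all
modules of the tube have projective and injective dimension at most `1` (in particular they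
are neither projective nor injective), and standardness gives the Auslander–Reiten formula
`Ext¹(E_i[m], E_j[n]) = 0 ↔ Hom(E_j[n], τ(E_i[m])) = 0`, `τ(E_i[m]) = E_{i-1}[m]`, together
with the cone criterion for vanishing of extensions between modules of the tube. -/
structure HerStableTube (R : Type) [Ring R] (r : ℕ) where
  E : ZMod r → ℕ → ModuleCat R
  indec : ∀ (j : ZMod r) (m : ℕ), 1 ≤ m → Indec R (E j m)
  not_proj : ∀ (j : ZMod r) (m : ℕ), 1 ≤ m → ¬ Projective (E j m)
  not_inj : ∀ (j : ZMod r) (m : ℕ), 1 ≤ m → ¬ Injective (E j m)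
  mouth_orth : ∀ i j : ZMod r, i ≠ j → HomZero R (E i 1) (E j 1)
  mouth_brick : ∀ i : ZMod r, ¬ HomZero R (E i 1) (E i 1)
  ar_formula : ∀ (i j : ZMod r) (m n : ℕ), 1 ≤ m → 1 ≤ n →
      (Ext1Zero R (E i m) (E j n) ↔ HomZero R (E j n) (E (i - 1) m))
  ext_cone : ∀ (i j : ZMod r) (m n : ℕ), 1 ≤ m → 1 ≤ n →
      Ext1Zero R (E i m) (E j n) → Ext1Zero R (E j n) (E i m) →
      Disjoint (coneSet r i m) (coneSet r (j - 1) n)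

/-- An (indecomposable) module lies in the tube `T` when it is isomorphic to some `E_j[m]`,
`m ≥ 1`; equivalently, it lies in `add T`. -/
def HerStableTube.Mem {R : Type} [Ring R] {r : ℕ} (T : HerStableTube R r)
    (M : ModuleCat R) : Prop :=
  ∃ (j : ZMod r) (m : ℕ), 1 ≤ m ∧ Nonempty (M ≅ T.E j m)

/-! The mouth modules are pairwise orthogonal bricks, and by the Auslander–Reiten formula
`Ext¹(X_i, X_j) ≅ D Hom(X_j, τ X_i) = D Hom(X_j, X_{i-1})` vanishes unless `j = i - 1`.
Listing `X_{r-1}, …, X_1` in decreasing order, `τ` of each term is the next term, or `X_0 = X_r`,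
which is left out; so it is never a term at the same or an earlier position. -/

theorem ZMod.natCast_ne_natCast_of_lt {n a b : ℕ} (ha : a < n) (hb : b < n) (hab : a ≠ b) :
    (a : ZMod n) ≠ b := by
  rwa [Ne, ZMod.natCast_eq_natCast_iff', Nat.mod_eq_of_lt ha, Nat.mod_eq_of_lt hb]

namespace HerStableTube

variable {R : Type} [Ring R] {r : ℕ} (T : HerStableTube R r)

theorem ext1Zero_mouth_of_ne {i j : ZMod r} (h : j ≠ i - 1) : Ext1Zero R (T.E i 1) (T.E j 1) :=
  (T.ar_formula i j 1 1 le_rfl le_rfl).mpr (T.mouth_orth j (i - 1) h)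

theorem isStratSys_mouth {t : ℕ} (a : Fin t → ZMod r) (ha : Function.Injective a)
    (hτ : ∀ i j, i ≤ j → a i ≠ a j - 1) : IsStratSys R fun k => T.E (a k) 1 :=
  ⟨fun k => T.indec (a k) 1 le_rfl,
    fun _ _ hij => T.mouth_orth _ _ (ha.ne hij.ne'),
    fun i j hij => T.ext1Zero_mouth_of_ne (hτ i j hij)⟩

end HerStableTube

theorem mouth_stratifying_system_general (R : Type) [Ring R] (r : ℕ)
    (T : HerStableTube R r) :
    IsStratSys R (fun k : Fin (r - 1) => T.E (((r - 1 - (k : ℕ) : ℕ) : ZMod r)) 1) := by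
  refine T.isStratSys_mouth _ (fun k l hkl => Fin.ext ?_) fun i j hij => ?_
  · have hk := k.isLt
    have hl := l.isLt
    by_contra hne
    exact ZMod.natCast_ne_natCast_of_lt (by omega) (by omega) (by omega) hkl
  · have hj := j.isLt
    have hij : (i : ℕ) ≤ j := hij
    rw [← Nat.cast_pred (by omega)]
    exact ZMod.natCast_ne_natCast_of_lt (by omega) (by omega) (by omega)

/-- Let `T_λ` be a hereditary standard stable tube of rank `r ≥ 1`, with
mouth `τ`-cycle `(X₁, …, X_r)`, `X_i = E_i[1]`, `τ X_i = X_{i-1}`. Then the sequence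
`(X_{r-1}, X_{r-2}, …, X₁)` is a stratifying system of size `r - 1`. -/
theorem mouth_stratifying_system (R : Type) [Ring R] (r : ℕ) (hr : 1 ≤ r)
    (T : HerStableTube R r) :
    IsStratSys R (fun k : Fin (r - 1) => T.E (((r - 1 - (k : ℕ) : ℕ) : ZMod r)) 1) :=
  mouth_stratifying_system_general R r T
end
end

section
/- Let B be a finite dimensional algebra and 0 → L → X ⊕ Y → M → 0 an almost split sequence in mod B with maps (f', g')^t : L → X ⊕ Y and (f, g) : X ⊕ Y → M. If f' is a monomorphism then g is a monomorphism; if f' is an epimorphism then g is an epimorphism. Symmetrically, if g' is a monomorphism (resp. epimorphism) then f is a monomorphism (resp. epimorphism). -/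
open CategoryTheory CategoryTheory.Limits

noncomputable section

/-- An almost split (Auslander–Reiten) sequence: a non-split short exact sequence
`0 → X₁ → X₂ → X₃ → 0` with `X₁`, `X₃` indecomposable, which is right almost split
(every non-split-epimorphism `Z → X₃` factors through `X₂`) and left almost split
(every non-split-monomorphism `X₁ → Z` factors through `X₂`). -/
structure AlmostSplit {R : Type} [Ring R]
    (S : CategoryTheory.ShortComplex (ModuleCat R)) : Prop where
  shortExact : S.ShortExact
  nonsplit : IsEmpty S.Splitting
  indec₁ : Indec R S.X₁
  indec₃ : Indec R S.X₃
  right_almost_split : ∀ (Z : ModuleCat R) (h : Z ⟶ S.X₃),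
    (¬ ∃ s : S.X₃ ⟶ Z, s ≫ h = 𝟙 S.X₃) → ∃ u : Z ⟶ S.X₂, u ≫ S.g = h
  left_almost_split : ∀ (Z : ModuleCat R) (h : S.X₁ ⟶ Z),
    (¬ ∃ s : Z ⟶ S.X₁, h ≫ s = 𝟙 S.X₁) → ∃ u : S.X₂ ⟶ Z, S.f ≫ u = h

/-! The kernel of `(f, g)` consists of the pairs `(f' l, g' l)`, so a pair `(0, y)` killed by
`(f, g)` comes from some `l` with `f' l = 0`; when `f'` is injective, `l = 0` and hence `y = 0`.
Dually, a map `k` on `M` with `g ≫ k = 0` satisfies `f' ≫ f ≫ k = -(g' ≫ g ≫ k) = 0`, so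
`f ≫ k = 0` when `f'` is epi, and then `k = 0` because `(f, g)` is epi. The statements about `g'`
follow by swapping the two summands. -/

section BiprodShortComplex

variable {C : Type*} [Category C] [Preadditive C] [HasBinaryBiproducts C]
  {L X Y M : C} {f' : L ⟶ X} {g' : L ⟶ Y} {f : X ⟶ M} {g : Y ⟶ M}

theorem biprod_lift_swap_comp_desc_swap_eq_zero (w : biprod.lift f' g' ≫ biprod.desc f g = 0) :
    biprod.lift g' f' ≫ biprod.desc g f = 0 := by
  simpa [add_comm] using w

def biprodSwapIso (w : biprod.lift f' g' ≫ biprod.desc f g = 0) :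
    ShortComplex.mk (biprod.lift f' g') (biprod.desc f g) w ≅
      ShortComplex.mk (biprod.lift g' f') (biprod.desc g f)
        (biprod_lift_swap_comp_desc_swap_eq_zero w) :=
  ShortComplex.isoMk (Iso.refl L) (biprod.braiding X Y) (Iso.refl M)

theorem mono_of_exact_of_mono_left [Balanced C] {w : biprod.lift f' g' ≫ biprod.desc f g = 0}
    (hS : (ShortComplex.mk (biprod.lift f' g') (biprod.desc f g) w).Exact) [Mono f'] : Mono g := by
  have : Mono (biprod.lift f' g') := mono_of_mono_fac (biprod.lift_fst f' g')
  refine Preadditive.mono_of_cancel_zero _ fun {Z} k hk => ?_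
  obtain ⟨u, hu⟩ := hS.lift' (biprod.lift 0 k) (by simp [hk])
  have hu0 : u = 0 := by
    rw [← cancel_mono f', zero_comp]
    simpa using hu =≫ biprod.fst
  simpa [hu0] using (hu =≫ biprod.snd).symm

theorem epi_of_epi_desc_of_epi_left (w : biprod.lift f' g' ≫ biprod.desc f g = 0)
    [Epi (biprod.desc f g)] [Epi f'] : Epi g := by
  refine Preadditive.epi_of_cancel_zero _ fun {Z} k hk => ?_
  have hfk : f ≫ k = 0 := by
    rw [← cancel_epi f', comp_zero]
    simpa [hk] using w =≫ k
  rw [← cancel_epi (biprod.desc f g), comp_zero]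
  ext <;> simp [hfk, hk]

end BiprodShortComplex

theorem almost_split_mono_epi_general (B : Type) [Ring B]
    (L X Y M : ModuleCat B)
    (f' : L ⟶ X) (g' : L ⟶ Y) (f : X ⟶ M) (g : Y ⟶ M)
    (w : biprod.lift f' g' ≫ biprod.desc f g = 0)
    (h : AlmostSplit (CategoryTheory.ShortComplex.mk (biprod.lift f' g') (biprod.desc f g) w)) :
    (Mono f' → Mono g) ∧ (Epi f' → Epi g) ∧ (Mono g' → Mono f) ∧ (Epi g' → Epi f) := by
  have hS := h.shortExact
  have hS' := ShortComplex.shortExact_of_iso (biprodSwapIso w) hS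
  have := hS.epi_g
  have := hS'.epi_g
  exact ⟨fun _ => mono_of_exact_of_mono_left hS.exact, fun _ => epi_of_epi_desc_of_epi_left w,
    fun _ => mono_of_exact_of_mono_left hS'.exact,
    fun _ => epi_of_epi_desc_of_epi_left (biprod_lift_swap_comp_desc_swap_eq_zero w)⟩

/-- Let `B` be a finite dimensional algebra and
`0 → L →(f',g')ᵗ→ X ⊕ Y →(f,g)→ M → 0` an almost split sequence in `mod B`. If `f'` is a
monomorphism (resp. epimorphism), then `g` is a monomorphism (resp. epimorphism); and if
`g'` is a monomorphism (resp. epimorphism), then `f` is a monomorphism (resp. epimorphism). -/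
theorem almost_split_mono_epi (K B : Type) [Field K] [Ring B] [Algebra K B]
    [FiniteDimensional K B]
    (L X Y M : ModuleCat B)
    (f' : L ⟶ X) (g' : L ⟶ Y) (f : X ⟶ M) (g : Y ⟶ M)
    (w : biprod.lift f' g' ≫ biprod.desc f g = 0)
    (h : AlmostSplit (CategoryTheory.ShortComplex.mk (biprod.lift f' g') (biprod.desc f g) w)) :
    (Mono f' → Mono g) ∧ (Epi f' → Epi g) ∧ (Mono g' → Mono f) ∧ (Epi g' → Epi f) :=
  almost_split_mono_epi_general B L X Y M f' g' f g w h
end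
end

section
/- Let A = KΔ(Ã_{p,q}) and F, G the regular stratifying system of size p+q−2 of simple regular modules. Then (S_{p+q−1}, F_1, ..., F_{p−1}, G_1, ..., G_{q−1}, P_0) is a complete stratifying system of size p+q over A. -/
open CategoryTheory CategoryTheory.Limits

noncomputable section

/-- The arrows of the canonically oriented Euclidean quiver `Δ(Ã_{p,q})`, on vertices
`0, 1, …, p+q-1`: two paths `p-1 → ⋯ → 1 → 0` and `p+q-2 → ⋯ → p → 0`, together with the
arrows `p+q-1 → p-1` and `p+q-1 → p+q-2`. -/
def DeltaArrow (p q a b : ℕ) : Prop :=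
  (b + 1 = a ∧ a ≤ p - 1) ∨ (b = 0 ∧ a = p) ∨
  (b + 1 = a ∧ p + 1 ≤ a ∧ a ≤ p + q - 2) ∨
  (a = p + q - 1 ∧ (b = p - 1 ∨ b = p + q - 2))

/-!
Every module of the sequence is simple, so indecomposability is automatic and `Hom` between
two distinct members vanishes by Schur's lemma. The sequence lists the vertices in the order
`p+q-1, p-1, …, 1, p+q-2, …, p, 0`, against the orientation of every arrow of `Δ(Ã_{p,q})`;
since `Ext¹(S_a, S_b) ≠ 0` only along an arrow `a → b`, all the required `Ext¹` vanish.
-/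

section Simple

variable {R : Type} [Ring R]

lemma Indec.of_isSimpleModule {M : ModuleCat R} (hM : IsSimpleModule R M) : Indec R M := by
  have : Simple M := (simple_iff_isSimpleModule' M).mpr hM
  obtain ⟨hne, hsplit⟩ := indecomposable_of_simple M
  exact ⟨hne, fun N P ⟨e⟩ => hsplit N P e⟩

lemma HomZero.of_isSimpleModule {M N : ModuleCat R} (hM : IsSimpleModule R M)
    (hN : IsSimpleModule R N) (hMN : IsEmpty (M ≅ N)) : HomZero R M N := by
  intro f
  rcases LinearMap.bijective_or_eq_zero f.hom with hbij | hzero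
  · exact hMN.elim (LinearEquiv.ofBijective f.hom hbij).toModuleIso
  · ext x
    simp [hzero]

lemma IsStratSys.comp_of_isSimpleModule {n t : ℕ} {S : Fin n → ModuleCat R}
    (hsimple : ∀ i, IsSimpleModule R (S i)) (hnoniso : ∀ i j, i ≠ j → IsEmpty (S i ≅ S j))
    {σ : Fin t → Fin n} (hσ : Function.Injective σ)
    (hext : ∀ i j, i ≤ j → Ext1Zero R (S (σ j)) (S (σ i))) :
    IsStratSys R (S ∘ σ) :=
  ⟨fun _ => Indec.of_isSimpleModule (hsimple _),
    fun _ _ hij =>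
      HomZero.of_isSimpleModule (hsimple _) (hsimple _) (hnoniso _ _ (hσ.ne hij.ne')),
    hext⟩

end Simple

/-- The vertex of `Δ(Ã_{p,q})` in position `k` of the sequence
`p+q-1, p-1, …, 1, p+q-2, …, p, 0`. -/
def deltaOrder (p q k : ℕ) : ℕ :=
  if k = 0 then p + q - 1
  else if k ≤ p - 1 then p - k
  else if k ≤ p + q - 2 then 2 * p + q - 2 - k
  else 0

lemma deltaOrder_lt {p q k : ℕ} (hk : k < p + q) : deltaOrder p q k < p + q := by
  unfold deltaOrder
  split_ifs <;> omega

lemma deltaOrder_inj_of_lt {p q a b : ℕ} (hp : 1 ≤ p) (hq : 1 ≤ q) (ha : a < p + q)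
    (hb : b < p + q) (hab : deltaOrder p q a = deltaOrder p q b) : a = b := by
  unfold deltaOrder at hab
  split_ifs at hab <;> omega

lemma not_deltaArrow_deltaOrder {p q i j : ℕ} (hp : 1 ≤ p) (hq : 1 ≤ q) (hij : i ≤ j)
    (hj : j < p + q) :
    ¬ DeltaArrow p q (deltaOrder p q j) (deltaOrder p q i) := by
  unfold deltaOrder
  split_ifs <;> (intro h; unfold DeltaArrow at h; omega)

/-- Let `A = KΔ(Ã_{p,q})`, `1 ≤ p ≤ q`, with simple modules
`S₀, …, S_{p+q-1}`, where `S₀ = P₀` is simple projective (vertex `0` is the unique sink),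
`S_{p+q-1} = I_{p+q-1}` is simple injective (vertex `p+q-1` is the unique source), and
`F_i = S_{p-i}` (`i = 1, …, p-1`), `G_j = S_{p+q-1-j}` (`j = 1, …, q-1`) are the simple
regular modules. Then `(S_{p+q-1}, F₁, …, F_{p-1}, G₁, …, G_{q-1}, P₀)` is a complete
stratifying system of size `p + q` over `A`. -/
theorem delta_complete_stratifying_system (A : Type) [Ring A]
    (p q : ℕ) (hp : 1 ≤ p) (hpq : p ≤ q)
    (S : Fin (p + q) → ModuleCat A) (hS : IsCompleteSimpleList A S)
    (hdelta : ∀ a b : Fin (p + q),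
      (¬ Ext1Zero A (S a) (S b)) ↔ DeltaArrow p q (a : ℕ) (b : ℕ))
    (W : Fin (p + q) → ModuleCat A)
    (hWdef : ∀ k : Fin (p + q), W k =
      if (k : ℕ) = 0 then S ⟨p + q - 1, by omega⟩
      else if h1 : (k : ℕ) ≤ p - 1 then S ⟨p - (k : ℕ), by omega⟩
      else if h2 : (k : ℕ) ≤ p + q - 2 then S ⟨2 * p + q - 2 - (k : ℕ), by omega⟩
      else S ⟨0, by omega⟩) :
    IsStratSys A W := by
  obtain ⟨hsimple, hnoniso, -⟩ := hS
  have hq : 1 ≤ q := hp.trans hpq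
  let σ : Fin (p + q) → Fin (p + q) := fun k => ⟨deltaOrder p q k, deltaOrder_lt k.isLt⟩
  have hW : W = S ∘ σ := by
    funext k
    rw [hWdef k]
    simp only [Function.comp_apply, σ, deltaOrder]
    split_ifs <;> rfl
  have hσ : Function.Injective σ := fun a b hab =>
    Fin.ext (deltaOrder_inj_of_lt hp hq a.isLt b.isLt (congrArg Fin.val hab))
  rw [hW]
  refine IsStratSys.comp_of_isSimpleModule hsimple hnoniso hσ fun i j hij => ?_
  by_contra hext
  exact not_deltaArrow_deltaOrder hp hq hij j.isLt ((hdelta _ _).mp hext)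
end
end
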